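/- For any family $\mathcal{V}$ of subspaces of $\mathbb{F}_q^n$, $\sum_{V \in \mathcal{V}} \frac{1}{c_q(V)\,\qbinom{n}{\dim V}_q} \leq 1$, where $c_q(V)$ is the maximum length of a chain of subspaces in $\mathcal{V}$ containing $V$. -/

import Mathlib

/-- The Gaussian (q-)binomial coefficient `[n choose k]_q` as a rational number. -/
def qbinom (q n k : ℕ) : ℚ :=
  ∏ i ∈ Finset.range k, ((q : ℚ) ^ (n - i) - 1) / ((q : ℚ) ^ (k - i) - 1)

/-- `chainHeight 𝒱 V` is the maximum length of a chain of subspaces from `𝒱` containing `V`. -/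
noncomputable def chainHeight {F : Type*} [Field F] {n : ℕ}
    (𝒱 : Finset (Submodule F (Fin n → F))) (V : Submodule F (Fin n → F)) : ℕ :=
  sSup {k : ℕ | ∃ 𝒞 ⊆ 𝒱, V ∈ 𝒞 ∧ IsChain (· ≤ ·) (𝒞 : Set (Submodule F (Fin n → F))) ∧
    𝒞.card = k}

open Module Submodule Finset

namespace QMT

variable {F : Type*} [Field F] [Fintype F] {n : ℕ}

noncomputable local instance : Fintype (Submodule F (Fin n → F)) := Fintype.ofFinite _

open Classical in
noncomputable def indepT (F : Type*) [Field F] [Fintype F] (n k : ℕ) :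
    Finset (Fin k → (Fin n → F)) :=
  Finset.univ.filter (fun s => LinearIndependent F s)

open Classical in
noncomputable def Gr (F : Type*) [Field F] [Fintype F] (n k : ℕ) :
    Finset (Submodule F (Fin n → F)) :=
  Finset.univ.filter (fun V => Module.finrank F V = k)

lemma mem_indepT {k : ℕ} {s : Fin k → (Fin n → F)} :
    s ∈ indepT F n k ↔ LinearIndependent F s := by
  simp [indepT]

lemma mem_Gr {k : ℕ} {V : Submodule F (Fin n → F)} :
    V ∈ Gr F n k ↔ Module.finrank F V = k := by
  simp [Gr]

/-- Span of the first `k` vectors of a tuple. -/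
def spanPrefix (k : ℕ) (b : Fin n → (Fin n → F)) : Submodule F (Fin n → F) :=
  Submodule.span F (b '' {i : Fin n | (i : ℕ) < k})

lemma image_prefix {α : Type*} {k : ℕ} (hk : k ≤ n) (b : Fin n → α) :
    b '' {i : Fin n | (i : ℕ) < k} = Set.range (b ∘ Fin.castLE hk) := by
  ext x
  constructor
  · rintro ⟨i, hi, rfl⟩
    exact ⟨⟨(i : ℕ), hi⟩, congrArg b (Fin.ext rfl)⟩
  · rintro ⟨j, rfl⟩
    exact ⟨Fin.castLE hk j, j.2, rfl⟩

lemma spanPrefix_eq {k : ℕ} (hk : k ≤ n) (b : Fin n → (Fin n → F)) :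
    spanPrefix k b = Submodule.span F (Set.range (b ∘ Fin.castLE hk)) := by
  rw [spanPrefix, image_prefix hk]

lemma spanPrefix_mono {k l : ℕ} (hkl : k ≤ l) (b : Fin n → (Fin n → F)) :
    spanPrefix k b ≤ spanPrefix l b :=
  Submodule.span_mono (Set.image_mono (fun i hi => lt_of_lt_of_le hi hkl))

lemma finrank_spanPrefix {k : ℕ} (hk : k ≤ n) {b : Fin n → (Fin n → F)}
    (hb : LinearIndependent F b) : Module.finrank F (spanPrefix k b) = k := by
  rw [spanPrefix_eq hk, finrank_span_eq_card (hb.comp _ (Fin.castLE_injective hk))]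
  simp

set_option linter.unusedSectionVars false
set_option maxHeartbeats 1000000

/-- The equivalence between independent tuples in `V` and independent spanning tuples. -/
noncomputable def basesEquiv (V : Submodule F (Fin n → F)) {k : ℕ}
    (hV : Module.finrank F V = k) :
    { s : Fin k → V // LinearIndependent F s } ≃
    { t : Fin k → (Fin n → F) // LinearIndependent F t ∧ Submodule.span F (Set.range t) = V } where
  toFun s := ⟨(V.subtype) ∘ s.1, by
    have hker : LinearMap.ker V.subtype = ⊥ := Submodule.ker_subtype V
    refine ⟨(LinearMap.linearIndependent_iff V.subtype hker).2 s.2, ?_⟩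
    rw [Set.range_comp, ← Submodule.map_span]
    rw [s.2.span_eq_top_of_card_eq_finrank' (by simpa using hV.symm), Submodule.map_subtype_top]⟩
  invFun t := ⟨fun i => ⟨t.1 i, by
      have h := Submodule.subset_span (R := F) (Set.mem_range_self (f := t.1) i)
      rwa [t.2.2] at h⟩, by
    apply LinearIndependent.of_comp V.subtype
    exact t.2.1⟩
  left_inv s := by ext i; rfl
  right_inv t := by ext i; rfl

open Classical in
lemma card_indepT {k : ℕ} (hk : k ≤ n) :
    (indepT F n k).card = ∏ i : Fin k, (Fintype.card F ^ n - Fintype.card F ^ (i : ℕ)) := by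
  have h := card_linearIndependent (K := F) (V := Fin n → F) (k := k)
    (by rw [finrank_fin_fun]; exact hk)
  rw [finrank_fin_fun] at h
  rw [indepT]
  rw [show (Finset.univ.filter (fun s : Fin k → (Fin n → F) => LinearIndependent F s)).card
    = Nat.card {s : Fin k → (Fin n → F) // LinearIndependent F s} by
      rw [Nat.card_eq_fintype_card, Fintype.card_subtype]]
  exact h

open Classical in
lemma card_bases (V : Submodule F (Fin n → F)) {k : ℕ} (hV : Module.finrank F V = k) :
    ((indepT F n k).filter (fun s => Submodule.span F (Set.range s) = V)).card
      = ∏ i : Fin k, (Fintype.card F ^ k - Fintype.card F ^ (i : ℕ)) := by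
  have h := card_linearIndependent (K := F) (V := V) (k := k) (le_of_eq hV.symm)
  rw [hV] at h
  rw [← h]
  rw [indepT, Finset.filter_filter]
  rw [show (Finset.univ.filter (fun s : Fin k → (Fin n → F) =>
      LinearIndependent F s ∧ Submodule.span F (Set.range s) = V)).card
    = Nat.card {t : Fin k → (Fin n → F) //
        LinearIndependent F t ∧ Submodule.span F (Set.range t) = V} by
      rw [Nat.card_eq_fintype_card, Fintype.card_subtype]]
  rw [Nat.card_eq_fintype_card, Nat.card_eq_fintype_card]
  exact (Fintype.card_congr (basesEquiv V hV)).symm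


open Classical in
lemma card_Gr_mul {k : ℕ} (hk : k ≤ n) :
    (Gr F n k).card * ∏ i : Fin k, (Fintype.card F ^ k - Fintype.card F ^ (i : ℕ))
      = ∏ i : Fin k, (Fintype.card F ^ n - Fintype.card F ^ (i : ℕ)) := by
  have hmem : ∀ s ∈ indepT F n k, Submodule.span F (Set.range s) ∈ Gr F n k := by
    intro s hs
    have h1 : LinearIndependent F s := mem_indepT.1 hs
    simp only [Gr, Finset.mem_filter, Finset.mem_univ, true_and]
    rw [finrank_span_eq_card h1]
    simp
  have hfib := Finset.card_eq_sum_card_fiberwise hmem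
  rw [Finset.sum_congr rfl (fun V hV => card_bases V (mem_Gr.1 hV)), Finset.sum_const,
    smul_eq_mul] at hfib
  rw [← hfib, card_indepT hk]

lemma exists_mapEquiv (V W : Submodule F (Fin n → F))
    (h : Module.finrank F V = Module.finrank F W) :
    ∃ e : (Fin n → F) ≃ₗ[F] (Fin n → F),
      Submodule.map (e : (Fin n → F) →ₗ[F] (Fin n → F)) V = W := by
  obtain ⟨C, hC⟩ := Submodule.exists_isCompl V
  obtain ⟨D, hD⟩ := Submodule.exists_isCompl W
  have h2 : Module.finrank F C = Module.finrank F D := by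
    have h3 := Submodule.finrank_add_eq_of_isCompl hC
    have h4 := Submodule.finrank_add_eq_of_isCompl hD
    omega
  let e1 : V ≃ₗ[F] W := LinearEquiv.ofFinrankEq _ _ h
  let e2 : C ≃ₗ[F] D := LinearEquiv.ofFinrankEq _ _ h2
  let e := (Submodule.prodEquivOfIsCompl V C hC).symm.trans
    ((e1.prodCongr e2).trans (Submodule.prodEquivOfIsCompl W D hD))
  have key : ∀ v : V, (e : (Fin n → F) →ₗ[F] (Fin n → F)) (v : Fin n → F)
      = ((e1 v : W) : Fin n → F) := by
    intro v
    have hz : e2 0 = 0 := e2.map_zero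
    simp only [LinearEquiv.coe_coe, e, LinearEquiv.trans_apply,
      Submodule.prodEquivOfIsCompl_symm_apply_left, LinearEquiv.prodCongr_apply, hz,
      Submodule.coe_prodEquivOfIsCompl']
    simp
  refine ⟨e, le_antisymm ?_ ?_⟩
  · rintro x hx
    obtain ⟨v, hv, rfl⟩ := Submodule.mem_map.1 hx
    rw [show ((e : (Fin n → F) →ₗ[F] (Fin n → F)) v : Fin n → F)
      = ((e1 ⟨v, hv⟩ : W) : Fin n → F) from key ⟨v, hv⟩]
    exact (e1 ⟨v, hv⟩).2
  · intro w hw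
    refine Submodule.mem_map.2 ⟨(e1.symm ⟨w, hw⟩ : V), (e1.symm ⟨w, hw⟩).2, ?_⟩
    rw [key (e1.symm ⟨w, hw⟩), LinearEquiv.apply_symm_apply]

open Classical in
lemma comp_mem_fiber (e : (Fin n → F) ≃ₗ[F] (Fin n → F)) {k : ℕ} {V : Submodule F (Fin n → F)}
    {b : Fin n → (Fin n → F)} (hb : b ∈ (indepT F n n).filter (fun c => spanPrefix k c = V)) :
    (⇑e ∘ b) ∈ (indepT F n n).filter
      (fun c => spanPrefix k c = Submodule.map (e : (Fin n → F) →ₗ[F] (Fin n → F)) V) := by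
  simp only [Finset.mem_filter] at hb ⊢
  refine ⟨mem_indepT.2 ?_, ?_⟩
  · have := (LinearMap.linearIndependent_iff (e : (Fin n → F) →ₗ[F] (Fin n → F))
      (LinearEquiv.ker e)).2 (mem_indepT.1 hb.1)
    simpa using this
  · rw [← hb.2, spanPrefix, spanPrefix, Set.image_comp, Submodule.map_span]
    rfl

open Classical in
lemma card_fiber_eq {k : ℕ} {V W : Submodule F (Fin n → F)}
    (hV : Module.finrank F V = k) (hW : Module.finrank F W = k) :
    ((indepT F n n).filter (fun b => spanPrefix k b = V)).card =
    ((indepT F n n).filter (fun b => spanPrefix k b = W)).card := by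
  obtain ⟨e, he⟩ := exists_mapEquiv V W (hV.trans hW.symm)
  have hcomp : ((e.symm : (Fin n → F) →ₗ[F] (Fin n → F)).comp
      (e : (Fin n → F) →ₗ[F] (Fin n → F))) = LinearMap.id := by
    ext x; simp
  have hcomp' : ((e : (Fin n → F) →ₗ[F] (Fin n → F)).comp
      (e.symm : (Fin n → F) →ₗ[F] (Fin n → F))) = LinearMap.id := by
    ext x; simp
  have he' : Submodule.map ((e.symm : (Fin n → F) →ₗ[F] (Fin n → F))) W = V := by
    rw [← he, ← Submodule.map_comp, hcomp, Submodule.map_id]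
  refine Finset.card_bij' (fun b _ => ⇑e ∘ b) (fun c _ => ⇑e.symm ∘ c) ?_ ?_ ?_ ?_
  · intro b hb
    have := comp_mem_fiber e hb
    rwa [he] at this
  · intro c hc
    have := comp_mem_fiber e.symm hc
    rwa [he'] at this
  · intro b _; funext i; simp
  · intro c _; funext i; simp

open Classical in
lemma fiber_mul_card {k : ℕ} (hk : k ≤ n) {V : Submodule F (Fin n → F)}
    (hV : Module.finrank F V = k) :
    ((indepT F n n).filter (fun b => spanPrefix k b = V)).card * (Gr F n k).card
      = (indepT F n n).card := by
  have hmem : ∀ b ∈ indepT F n n, spanPrefix k b ∈ Gr F n k := by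
    intro b hb
    simp only [Gr, Finset.mem_filter, Finset.mem_univ, true_and]
    exact finrank_spanPrefix hk (mem_indepT.1 hb)
  have hsum := Finset.card_eq_sum_card_fiberwise hmem
  rw [Finset.sum_congr rfl (fun W hW => card_fiber_eq (mem_Gr.1 hW) hV), Finset.sum_const,
    smul_eq_mul] at hsum
  rw [mul_comm, ← hsum]

lemma qbinom_eq_div {q n k : ℕ} (hq : 2 ≤ q) (hk : k ≤ n) :
    qbinom q n k = (∏ i : Fin k, ((q : ℚ) ^ n - (q : ℚ) ^ (i : ℕ)))
      / (∏ i : Fin k, ((q : ℚ) ^ k - (q : ℚ) ^ (i : ℕ))) := by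
  have hq0 : (q : ℚ) ≠ 0 := by positivity
  rw [qbinom, ← Finset.prod_div_distrib, ← Fin.prod_univ_eq_prod_range]
  refine Finset.prod_congr rfl ?_
  intro i _
  have hik : (i : ℕ) < k := i.2
  have hin : (i : ℕ) < n := lt_of_lt_of_le hik hk
  have h1 : (q : ℚ) ^ n - (q : ℚ) ^ (i : ℕ) = (q : ℚ) ^ (i : ℕ) * ((q : ℚ) ^ (n - (i : ℕ)) - 1) := by
    rw [mul_sub, mul_one, ← pow_add, Nat.add_sub_cancel' hin.le]
  have h2 : (q : ℚ) ^ k - (q : ℚ) ^ (i : ℕ) = (q : ℚ) ^ (i : ℕ) * ((q : ℚ) ^ (k - (i : ℕ)) - 1) := by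
    rw [mul_sub, mul_one, ← pow_add, Nat.add_sub_cancel' hik.le]
  rw [h1, h2, mul_div_mul_left _ _ (pow_ne_zero _ hq0)]

lemma prod_sub_cast {q m k : ℕ} (hq : 1 ≤ q) (hmk : k ≤ m) :
    ((∏ i : Fin k, (q ^ m - q ^ (i : ℕ)) : ℕ) : ℚ)
      = ∏ i : Fin k, ((q : ℚ) ^ m - (q : ℚ) ^ (i : ℕ)) := by
  rw [Nat.cast_prod]
  refine Finset.prod_congr rfl ?_
  intro i _
  rw [Nat.cast_sub (Nat.pow_le_pow_right hq (le_of_lt (lt_of_lt_of_le i.2 hmk)))]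
  push_cast
  ring

lemma prod_sub_pos {q k : ℕ} (hq : 2 ≤ q) :
    0 < ∏ i : Fin k, (q ^ k - q ^ (i : ℕ)) := by
  refine Finset.prod_pos ?_
  intro i _
  exact Nat.sub_pos_of_lt (Nat.pow_lt_pow_right (by omega) i.2)

open Classical in
lemma card_Gr_q {k : ℕ} (hq : 2 ≤ Fintype.card F) (hk : k ≤ n) :
    ((Gr F n k).card : ℚ) = qbinom (Fintype.card F) n k := by
  set q := Fintype.card F with hqdef
  have hcast := congrArg (Nat.cast : ℕ → ℚ) (card_Gr_mul (F := F) hk)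
  rw [Nat.cast_mul, prod_sub_cast (by omega) le_rfl, prod_sub_cast (by omega) hk] at hcast
  have hne : (∏ i : Fin k, ((q : ℚ) ^ k - (q : ℚ) ^ (i : ℕ))) ≠ 0 := by
    have := prod_sub_pos (q := q) (k := k) hq
    rw [← prod_sub_cast (q := q) (m := k) (k := k) (by omega) le_rfl]
    exact_mod_cast this.ne'
  rw [qbinom_eq_div hq hk, eq_div_iff hne]
  exact hcast

open Classical in
lemma chain_sum_le (𝒱 : Finset (Submodule F (Fin n → F))) (b : Fin n → (Fin n → F)) :
    ∑ V ∈ 𝒱.filter (fun V : Submodule F (Fin n → F) =>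
        spanPrefix (Module.finrank F V) b = V),
      (1 : ℚ) / (chainHeight 𝒱 V) ≤ 1 := by
  set T := 𝒱.filter (fun V : Submodule F (Fin n → F) =>
    spanPrefix (Module.finrank F V) b = V) with hT
  rcases Nat.eq_zero_or_pos T.card with h0 | hpos
  · rw [Finset.card_eq_zero.1 h0]; simp
  have hchain : IsChain (· ≤ ·) (T : Set (Submodule F (Fin n → F))) := by
    intro V hV W hW _
    rw [Finset.mem_coe, hT, Finset.mem_filter] at hV hW
    rcases le_total (Module.finrank F V) (Module.finrank F W) with h | h
    · exact Or.inl (by rw [← hV.2, ← hW.2]; exact spanPrefix_mono h b)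
    · exact Or.inr (by rw [← hW.2, ← hV.2]; exact spanPrefix_mono h b)
  have hle : ∀ V ∈ T, (T.card : ℚ) ≤ (chainHeight 𝒱 V : ℚ) := by
    intro V hV
    have hmem : T.card ∈ {m : ℕ | ∃ 𝒞 ⊆ 𝒱, V ∈ 𝒞 ∧
        IsChain (· ≤ ·) (𝒞 : Set (Submodule F (Fin n → F))) ∧ 𝒞.card = m} :=
      ⟨T, Finset.filter_subset _ _, hV, hchain, rfl⟩
    have hbdd : BddAbove {m : ℕ | ∃ 𝒞 ⊆ 𝒱, V ∈ 𝒞 ∧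
        IsChain (· ≤ ·) (𝒞 : Set (Submodule F (Fin n → F))) ∧ 𝒞.card = m} := by
      refine ⟨𝒱.card, ?_⟩
      rintro m ⟨𝒞, h𝒞, -, -, rfl⟩
      exact Finset.card_le_card h𝒞
    have h := le_csSup hbdd hmem
    rw [chainHeight]
    exact_mod_cast h
  calc ∑ V ∈ T, (1 : ℚ) / (chainHeight 𝒱 V)
      ≤ ∑ _V ∈ T, (1 : ℚ) / (T.card : ℚ) := by
        refine Finset.sum_le_sum ?_
        intro V hV
        exact one_div_le_one_div_of_le (by exact_mod_cast hpos) (hle V hV)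
    _ = 1 := by
        rw [Finset.sum_const, nsmul_eq_mul, mul_one_div,
          div_self (by exact_mod_cast hpos.ne')]

end QMT

open QMT in
/-- The q-analogue of the Malec–Tompkins strengthening of the LYM inequality. -/
theorem q_malec_tompkins (q n : ℕ) (F : Type*) [Field F] [Fintype F]
    (hq : Fintype.card F = q) (𝒱 : Finset (Submodule F (Fin n → F))) :
    ∑ V ∈ 𝒱, 1 / (chainHeight 𝒱 V * qbinom q n (Module.finrank F V)) ≤ 1 := by
  classical
  subst hq
  have hq2 : 2 ≤ Fintype.card F := Fintype.one_lt_card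
  have hΩcard : 0 < (indepT F n n).card := by
    rw [card_indepT le_rfl]
    exact prod_sub_pos hq2
  have key : ∀ V ∈ 𝒱, (1 : ℚ) /
        (chainHeight 𝒱 V * qbinom (Fintype.card F) n (Module.finrank F V))
      = (((indepT F n n).filter
            (fun b => spanPrefix (Module.finrank F V) b = V)).card : ℚ)
        / (chainHeight 𝒱 V * (indepT F n n).card) := by
    intro V _
    have hkn : Module.finrank F V ≤ n := by
      have h := Submodule.finrank_le V
      rwa [Module.finrank_fin_fun] at h
    have hGr : ((Gr F n (Module.finrank F V)).card : ℚ)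
        = qbinom (Fintype.card F) n (Module.finrank F V) := card_Gr_q hq2 hkn
    have hmul := fiber_mul_card hkn (V := V) rfl
    have hGr0 : (Gr F n (Module.finrank F V)).card ≠ 0 := by
      intro h; rw [h, mul_zero] at hmul; omega
    have hfib0 : (((indepT F n n).filter
        (fun b => spanPrefix (Module.finrank F V) b = V)).card : ℚ) ≠ 0 := by
      intro h
      rw [Nat.cast_eq_zero.1 h, zero_mul] at hmul
      omega
    rcases eq_or_ne ((chainHeight 𝒱 V : ℚ)) 0 with h0 | h0
    · rw [h0, zero_mul, zero_mul, div_zero, div_zero]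
    · rw [← hGr]
      have hmulq : (((indepT F n n).filter
            (fun b => spanPrefix (Module.finrank F V) b = V)).card : ℚ)
          * ((Gr F n (Module.finrank F V)).card : ℚ) = ((indepT F n n).card : ℚ) := by
        exact_mod_cast congrArg (Nat.cast : ℕ → ℚ) hmul
      rw [div_eq_div_iff (by positivity) ?hne]
      case hne =>
        apply mul_ne_zero h0
        exact_mod_cast Nat.pos_of_ne_zero (fun h => hΩcard.ne' (by omega)) |>.ne'
      · rw [one_mul, ← hmulq]; ring
  rw [Finset.sum_congr rfl key]
  have step : ∀ V ∈ 𝒱, (((indepT F n n).filter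
        (fun b => spanPrefix (Module.finrank F V) b = V)).card : ℚ)
        / (chainHeight 𝒱 V * (indepT F n n).card)
      = (∑ b ∈ indepT F n n, if spanPrefix (Module.finrank F V) b = V
          then (1 : ℚ) / (chainHeight 𝒱 V) else 0) / (indepT F n n).card := by
    intro V _
    rw [Finset.card_filter, Nat.cast_sum, Finset.sum_div, Finset.sum_div]
    refine Finset.sum_congr rfl ?_
    intro b _
    split_ifs with h
    · rw [Nat.cast_one, div_div]
    · rw [Nat.cast_zero, zero_div, zero_div]
  rw [Finset.sum_congr rfl step, ← Finset.sum_div, Finset.sum_comm]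
  rw [div_le_one (by exact_mod_cast hΩcard)]
  calc ∑ b ∈ indepT F n n, ∑ V ∈ 𝒱, (if spanPrefix (Module.finrank F V) b = V
        then (1 : ℚ) / (chainHeight 𝒱 V) else 0)
      ≤ ∑ _b ∈ indepT F n n, (1 : ℚ) := by
        refine Finset.sum_le_sum ?_
        intro b _
        rw [← Finset.sum_filter]
        exact chain_sum_le 𝒱 b
    _ = ((indepT F n n).card : ℚ) := by rw [Finset.sum_const, nsmul_eq_mul, mul_one]
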